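/- arXiv:2106.05150 — 8 statements merged into one kernel-verified Lean document; each statement's English description precedes it below -/
import Mathlib

section
/- Fix β ∈ (0,1] and a matrix H ∈ ℝ^{n×h}. Define the sequence Z^{(1)} = H and Z^{(k+1)} = (1−β) Ŝ Z^{(k)} + β H. Then the linear system (I − (1−β) Ŝ) Z = β H has a unique solution Z^{(∞)}, and the sequence Z^{(k)} converges to Z^{(∞)} as k → ∞. -/
/-!
Since `Ã` is symmetric and nonnegative with row sums `D̃`, the weighted Cauchy–Schwarz inequality
(a Schur test) shows that `Ŝ = D̃^{-1/2} Ã D̃^{-1/2}` has `ℓ²` operator norm at most `1`. Hence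
`Z ↦ (1 - β) Ŝ Z + β H` is a `(1 - β)`-contraction for the `ℓ²` operator norm on `ℝ^{n×h}`, and
for `β > 0` the Banach fixed point theorem gives both the unique solution of
`(I - (1 - β) Ŝ) Z = β H` (its fixed points) and the convergence of the iterates `Z^{(k)}`.
-/

open Matrix Filter Topology
open scoped Matrix.Norms.L2Operator NNReal

namespace Matrix

variable {ι : Type*} [Fintype ι] [DecidableEq ι]

noncomputable def symmetricNormalization (d : ι → ℝ) (a : Matrix ι ι ℝ) : Matrix ι ι ℝ :=
  diagonal (fun i => 1 / √(d i)) * a * diagonal (fun i => 1 / √(d i))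

section SchurTest

variable {a : Matrix ι ι ℝ} {d : ι → ℝ}

theorem sum_sq_symmetricNormalization_mulVec_le (ha : ∀ i j, 0 ≤ a i j) (hsymm : a.IsSymm)
    (hd : ∀ i, 0 < d i) (hrow : ∀ i, ∑ j, a i j ≤ d i) (x : ι → ℝ) :
    ∑ i, (symmetricNormalization d a *ᵥ x) i ^ 2 ≤ ∑ i, x i ^ 2 := by
  set z : ι → ℝ := fun j => x j / √(d j)
  have hcol : ∀ j, ∑ i, a i j ≤ d j := fun j => by
    simpa only [← hsymm.apply j] using hrow j
  have hrowwise : ∀ i, (symmetricNormalization d a *ᵥ x) i ^ 2 ≤ ∑ j, a i j * z j ^ 2 := by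
    intro i
    have hSx : (symmetricNormalization d a *ᵥ x) i = (∑ j, a i j * z j) / √(d i) := by
      simp only [symmetricNormalization, mulVec, dotProduct, mul_diagonal, diagonal_mul,
        Finset.sum_div, z]
      exact Finset.sum_congr rfl fun j _ => by ring
    have hCS : (∑ j, a i j * z j) ^ 2 ≤ (∑ j, a i j) * ∑ j, a i j * z j ^ 2 :=
      Finset.sum_sq_le_sum_mul_sum_of_sq_le_mul _ (fun j _ => ha i j)
        (fun j _ => mul_nonneg (ha i j) (sq_nonneg _)) (fun j _ => by ring_nf; rfl)
    rw [hSx, div_pow, Real.sq_sqrt (hd i).le, div_le_iff₀ (hd i)]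
    calc _ ≤ (∑ j, a i j) * ∑ j, a i j * z j ^ 2 := hCS
      _ ≤ d i * ∑ j, a i j * z j ^ 2 := by
        gcongr
        · exact Finset.sum_nonneg fun j _ => mul_nonneg (ha i j) (sq_nonneg _)
        · exact hrow i
      _ = _ := mul_comm _ _
  calc _ ≤ ∑ i, ∑ j, a i j * z j ^ 2 := Finset.sum_le_sum fun i _ => hrowwise i
    _ = ∑ j, (∑ i, a i j) * z j ^ 2 := by rw [Finset.sum_comm]; simp only [Finset.sum_mul]
    _ ≤ ∑ j, d j * z j ^ 2 := by gcongr with j; exact hcol j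
    _ = ∑ j, x j ^ 2 := by
      refine Finset.sum_congr rfl fun j _ => ?_
      simp only [z, div_pow, Real.sq_sqrt (hd j).le]
      field_simp [(hd j).ne']

theorem l2_opNorm_symmetricNormalization_le_one (ha : ∀ i j, 0 ≤ a i j) (hsymm : a.IsSymm)
    (hd : ∀ i, 0 < d i) (hrow : ∀ i, ∑ j, a i j ≤ d i) :
    ‖symmetricNormalization d a‖ ≤ 1 := by
  rw [l2_opNorm_def]
  refine ContinuousLinearMap.opNorm_le_bound _ zero_le_one fun x => ?_
  rw [one_mul, ← sq_le_sq₀ (norm_nonneg _) (norm_nonneg _)]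
  simp only [EuclideanSpace.norm_sq_eq, Real.norm_eq_abs, sq_abs]
  exact sum_sq_symmetricNormalization_mulVec_le ha hsymm hd hrow x.ofLp

end SchurTest

theorem contractingWith_smul_mul_add {κ : Type*} [Fintype κ] [DecidableEq κ]
    {S : Matrix ι ι ℝ} (hS : ‖S‖ ≤ 1) {c : ℝ≥0} (hc : c < 1) (B : Matrix ι κ ℝ) :
    ContractingWith c (fun Z : Matrix ι κ ℝ => (c : ℝ) • (S * Z) + B) := by
  refine ⟨hc, LipschitzWith.of_dist_le_mul fun Z W => ?_⟩
  rw [dist_eq_norm, dist_eq_norm, add_sub_add_right_eq_sub, ← smul_sub, ← Matrix.mul_sub,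
    norm_smul, NNReal.norm_eq]
  gcongr
  calc ‖S * (Z - W)‖ ≤ ‖S‖ * ‖Z - W‖ := l2_opNorm_mul S (Z - W)
    _ ≤ ‖Z - W‖ := mul_le_of_le_one_left (norm_nonneg _) hS

end Matrix

/-- Fix β ∈ (0,1] and H ∈ ℝ^{n×h}.  With Ŝ = D̃^{-1/2} Ã D̃^{-1/2}
(where Ã = A + I, D̃ = D + I, D the degree matrix of a symmetric nonnegative A),
define Z^{(1)} = H and Z^{(k+1)} = (1−β) Ŝ Z^{(k)} + β H.  Then the linear system
(I − (1−β) Ŝ) Z = β H has a unique solution Z^{(∞)} and Z^{(k)} → Z^{(∞)}. -/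
theorem stmt_0 {n h : ℕ} (A : Matrix (Fin n) (Fin n) ℝ)
    (hA_symm : Aᵀ = A) (hA_nonneg : ∀ i j, 0 ≤ A i j)
    (β : ℝ) (hβ : β ∈ Set.Ioc (0 : ℝ) 1)
    (H : Matrix (Fin n) (Fin h) ℝ)
    (S : Matrix (Fin n) (Fin n) ℝ)
    (hS : S = Matrix.diagonal (fun i => 1 / Real.sqrt ((∑ j, A i j) + 1)) * (A + 1) *
      Matrix.diagonal (fun i => 1 / Real.sqrt ((∑ j, A i j) + 1)))
    (Z : ℕ → Matrix (Fin n) (Fin h) ℝ)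
    (hZ1 : Z 0 = H)
    (hZrec : ∀ k : ℕ, Z (k + 1) = (1 - β) • (S * Z k) + β • H) :
    ∃ Zinf : Matrix (Fin n) (Fin h) ℝ,
      (∀ W : Matrix (Fin n) (Fin h) ℝ,
        ((1 : Matrix (Fin n) (Fin n) ℝ) - (1 - β) • S) * W = β • H ↔ W = Zinf) ∧
      Tendsto Z atTop (𝓝 Zinf) := by
  obtain ⟨hβ0, hβ1⟩ := hβ
  set c : ℝ≥0 := ⟨1 - β, sub_nonneg.2 hβ1⟩
  have hc : c < 1 := by rw [← NNReal.coe_lt_coe]; exact sub_lt_self 1 hβ0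
  have hS_le : ‖S‖ ≤ 1 := by
    refine hS ▸ l2_opNorm_symmetricNormalization_le_one (fun i j => ?_)
      (IsSymm.add hA_symm isSymm_one)
      (fun i => add_pos_of_nonneg_of_pos (Finset.sum_nonneg fun j _ => hA_nonneg i j) one_pos)
      (fun i => ?_)
    · rw [Matrix.add_apply, one_apply]; have := hA_nonneg i j; split_ifs <;> linarith
    · simp [Matrix.add_apply, one_apply, Finset.sum_add_distrib]
  set f := fun Y : Matrix (Fin n) (Fin h) ℝ => (c : ℝ) • (S * Y) + β • H
  have hf : ContractingWith c f := contractingWith_smul_mul_add hS_le hc (β • H)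
  have hZ : Z = fun k => f^[k] H := by
    funext k
    induction k with
    | zero => exact hZ1
    | succ k ih => rw [hZrec, ih, Function.iterate_succ_apply']; rfl
  have hsolve : ∀ W, ((1 : Matrix (Fin n) (Fin n) ℝ) - (1 - β) • S) * W = β • H ↔
      Function.IsFixedPt f W := fun W => by
    rw [Matrix.sub_mul, Matrix.one_mul, Matrix.smul_mul, sub_eq_iff_eq_add', eq_comm]; rfl
  refine ⟨hf.fixedPoint, fun W => (hsolve W).trans
    ⟨hf.fixedPoint_unique, fun hW => hW ▸ hf.fixedPoint_isFixedPt⟩, ?_⟩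
  -- the `ℓ²` operator norm induces the product topology definitionally
  rw [hZ]
  exact hf.tendsto_iterate_fixedPoint H
end

section
/- Fix β ∈ (0,1] and H ∈ ℝ^{n×h}, and consider the convex quadratic objective F(Y) = (1−β) Tr(Yᵀ L Y) + β ‖D̃^{1/2} Y − H‖_F² over Y ∈ ℝ^{n×h}. If Y* is a minimizer of F, then Z* = D̃^{1/2} Y* satisfies (I − (1−β) Ŝ) Z* = β H, and Z* is the unique solution of this linear system. -/
/-!
Put M = (1 - β) L + β D̃. Expanding the Frobenius norm gives
F(Y) = Tr(Yᵀ M Y) - 2 Tr((β D̃^{1/2} H)ᵀ Y) + const. The weighted Laplacian is positive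
semidefinite (xᵀ L x = ½ Σ A_ij (x_i - x_j)²) and D̃ is a positive diagonal, so M is positive
definite, and completing the square shows that any minimizer satisfies M Y* = β D̃^{1/2} H.
Conjugating by D̃^{-1/2} turns M into I - (1 - β) Ŝ, which yields the linear system for
Z* = D̃^{1/2} Y*; being a conjugate of the invertible M, this matrix is invertible, so the solution
is unique.
-/

open Matrix

section
variable {n m : Type*} [Fintype n] [Fintype m]

lemma Matrix.PosDef.trace_transpose_mul_mul_pos {M : Matrix n n ℝ} (hM : M.PosDef)
    {W : Matrix n m ℝ} (hW : W ≠ 0) : 0 < trace (Wᵀ * M * W) := by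
  have hcols : trace (Wᵀ * M * W) = ∑ c, Wᵀ c ⬝ᵥ M *ᵥ Wᵀ c := by
    simp only [trace, diag, mul_apply, dotProduct, mulVec, transpose_apply, Finset.mul_sum,
      Finset.sum_mul, mul_assoc]
    exact Finset.sum_congr rfl fun _ _ => Finset.sum_comm
  obtain ⟨c, hc⟩ : ∃ c, Wᵀ c ≠ 0 := by
    by_contra! h
    exact hW (transpose_eq_zero.mp (funext h))
  rw [hcols]
  exact Finset.sum_pos' (fun c _ => hM.posSemidef.dotProduct_mulVec_nonneg (Wᵀ c))
    ⟨c, Finset.mem_univ c, hM.dotProduct_mulVec_pos hc⟩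

lemma trace_transpose_sub_mul_mul_sub {M : Matrix n n ℝ} (hM : Mᵀ = M) (Y Y₀ : Matrix n m ℝ) :
    trace ((Y - Y₀)ᵀ * M * (Y - Y₀)) =
      trace (Yᵀ * M * Y) - 2 * trace ((M * Y₀)ᵀ * Y) + trace (Y₀ᵀ * M * Y₀) := by
  have hcross : trace (Yᵀ * M * Y₀) = trace (Y₀ᵀ * M * Y) := by
    rw [← trace_transpose, transpose_mul, transpose_mul, transpose_transpose, hM, Matrix.mul_assoc]
  simp only [transpose_sub, Matrix.sub_mul, Matrix.mul_sub, trace_sub, hcross, transpose_mul, hM]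
  ring

lemma Matrix.PosDef.mul_eq_of_forall_le [DecidableEq n] {M : Matrix n n ℝ} (hM : M.PosDef)
    {B Y : Matrix n m ℝ}
    (hY : ∀ Y' : Matrix n m ℝ, trace (Yᵀ * M * Y) - 2 * trace (Bᵀ * Y) ≤
      trace (Y'ᵀ * M * Y') - 2 * trace (Bᵀ * Y')) :
    M * Y = B := by
  have hsymm : Mᵀ = M := by simpa [conjTranspose_eq_transpose_of_trivial] using hM.isHermitian.eq
  -- complete the square around the critical point `M⁻¹ * B`
  set Y₀ := M⁻¹ * B
  have hMY₀ : M * Y₀ = B := by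
    rw [← Matrix.mul_assoc, mul_nonsing_inv _ ((isUnit_iff_isUnit_det M).mp hM.isUnit),
      Matrix.one_mul]
  have hY₀ : trace ((M * Y₀)ᵀ * Y₀) = trace (Y₀ᵀ * M * Y₀) := by
    rw [transpose_mul, hsymm]
  have hle := hY Y₀
  rw [← hMY₀, hY₀] at hle
  have hdiff := trace_transpose_sub_mul_mul_sub hsymm Y Y₀
  suffices Y - Y₀ = 0 by rw [← hMY₀, sub_eq_zero.mp this]
  by_contra hne
  linarith [hM.trace_transpose_mul_mul_pos hne]

lemma trace_objective_eq_quadratic (β : ℝ) (L s : Matrix n n ℝ) (Y H : Matrix n m ℝ) :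
    (1 - β) * trace (Yᵀ * L * Y) + β * trace ((s * Y - H)ᵀ * (s * Y - H)) =
      trace (Yᵀ * ((1 - β) • L + β • (sᵀ * s)) * Y) - 2 * trace ((β • (sᵀ * H))ᵀ * Y) +
        β * trace (Hᵀ * H) := by
  have hcross : trace (Yᵀ * (sᵀ * H)) = trace (Hᵀ * (s * Y)) := by
    rw [← trace_transpose, transpose_mul, transpose_mul, transpose_transpose, transpose_transpose,
      Matrix.mul_assoc]
  simp only [transpose_sub, transpose_mul, transpose_smul, transpose_transpose, Matrix.sub_mul,
    Matrix.mul_sub, Matrix.mul_add, Matrix.add_mul, Matrix.smul_mul, Matrix.mul_smul, trace_sub,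
    trace_add, trace_smul, smul_eq_mul, Matrix.mul_assoc, hcross]
  ring

end

section
variable {n : Type*} [Fintype n] [DecidableEq n] {A : Matrix n n ℝ}

lemma dotProduct_diagonal_sum_sub_mulVec (hA : Aᵀ = A) (x : n → ℝ) :
    x ⬝ᵥ (diagonal (fun i => ∑ j, A i j) - A) *ᵥ x = (∑ i, ∑ j, A i j * (x i - x j) ^ 2) / 2 := by
  have hswap : ∑ i, ∑ j, A i j * x j ^ 2 = ∑ i, ∑ j, A i j * x i ^ 2 := by
    rw [Finset.sum_comm]
    exact Finset.sum_congr rfl fun i _ => Finset.sum_congr rfl fun j _ => by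
      rw [← transpose_apply A i j, hA]
  have hexp : ∑ i, ∑ j, A i j * (x i - x j) ^ 2 =
      ∑ i, ∑ j, A i j * x i ^ 2 + ∑ i, ∑ j, A i j * x j ^ 2 - 2 * ∑ i, ∑ j, x i * (A i j * x j) := by
    simp only [Finset.mul_sum, ← Finset.sum_add_distrib, ← Finset.sum_sub_distrib]
    exact Finset.sum_congr rfl fun i _ => Finset.sum_congr rfl fun j _ => by ring
  have hdiag : x ⬝ᵥ diagonal (fun i => ∑ j, A i j) *ᵥ x = ∑ i, ∑ j, A i j * x i ^ 2 := by
    simp only [dotProduct, mulVec_diagonal, Finset.sum_mul, Finset.mul_sum]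
    exact Finset.sum_congr rfl fun i _ => Finset.sum_congr rfl fun j _ => by ring
  have hoff : x ⬝ᵥ A *ᵥ x = ∑ i, ∑ j, x i * (A i j * x j) := by
    simp only [dotProduct, mulVec, Finset.mul_sum]
  rw [sub_mulVec, dotProduct_sub, hdiag, hoff, hexp, hswap]
  ring

lemma posSemidef_diagonal_sum_sub (hA : Aᵀ = A) (hA0 : ∀ i j, 0 ≤ A i j) :
    (diagonal (fun i => ∑ j, A i j) - A).PosSemidef := by
  refine .of_dotProduct_mulVec_nonneg ?_ fun x => ?_
  · simp [IsHermitian, conjTranspose_eq_transpose_of_trivial, hA]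
  · rw [star_trivial, dotProduct_diagonal_sum_sub_mulVec hA]
    exact div_nonneg (Finset.sum_nonneg fun i _ => Finset.sum_nonneg fun j _ =>
      mul_nonneg (hA0 i j) (sq_nonneg _)) zero_le_two

lemma posDef_smul_diagonal_sum_sub_add_smul_diagonal (hA : Aᵀ = A) (hA0 : ∀ i j, 0 ≤ A i j)
    {β : ℝ} (hβ : β ∈ Set.Ioc 0 1) :
    ((1 - β) • (diagonal (fun i => ∑ j, A i j) - A) +
      β • diagonal (fun i => ∑ j, A i j + 1)).PosDef :=
  PosDef.posSemidef_add ((posSemidef_diagonal_sum_sub hA hA0).smul (sub_nonneg.2 hβ.2))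
    ((PosDef.diagonal fun i => add_pos_of_nonneg_of_pos
      (Finset.sum_nonneg fun j _ => hA0 i j) one_pos).smul hβ.1)

lemma diagonal_inv_sqrt_conj_eq_one_sub_smul (r : n → ℝ) (hr : ∀ i, 0 < r i + 1) (β : ℝ) :
    diagonal (fun i => 1 / √(r i + 1)) *
        ((1 - β) • (diagonal r - A) + β • diagonal (fun i => r i + 1)) *
        diagonal (fun i => 1 / √(r i + 1)) =
      1 - (1 - β) • (diagonal (fun i => 1 / √(r i + 1)) * (A + 1) *
        diagonal (fun i => 1 / √(r i + 1))) := by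
  have hsplit : (1 - β) • (diagonal r - A) + β • diagonal (fun i => r i + 1) =
      diagonal (fun i => r i + 1) - (1 - β) • (A + 1) := by
    rw [← diagonal_add r (fun _ => 1), diagonal_one]
    module
  have hnorm : diagonal (fun i => 1 / √(r i + 1)) * diagonal (fun i => r i + 1) *
      diagonal (fun i => 1 / √(r i + 1)) = 1 := by
    rw [diagonal_mul_diagonal, diagonal_mul_diagonal, ← diagonal_one]
    congr 1
    funext i
    have hsq := Real.mul_self_sqrt (hr i).le
    have hpos := Real.sqrt_pos.mpr (hr i)
    field_simp
    linarith
  rw [hsplit, Matrix.mul_sub, Matrix.sub_mul, hnorm, Matrix.mul_smul, Matrix.smul_mul]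

end

/-- Fix β ∈ (0,1] and H ∈ ℝ^{n×h}.  Consider
F(Y) = (1−β) Tr(Yᵀ L Y) + β ‖D̃^{1/2} Y − H‖_F² over Y ∈ ℝ^{n×h}, where L = D − A
is the Laplacian, D̃ = D + I and Ŝ = D̃^{-1/2} Ã D̃^{-1/2}.  If Y* minimizes F, then
Z* = D̃^{1/2} Y* satisfies (I − (1−β) Ŝ) Z* = β H, and Z* is the unique solution of
this linear system. -/
theorem stmt_2 {n h : ℕ} (A : Matrix (Fin n) (Fin n) ℝ)
    (hA_symm : Aᵀ = A) (hA_nonneg : ∀ i j, 0 ≤ A i j)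
    (β : ℝ) (hβ : β ∈ Set.Ioc (0 : ℝ) 1)
    (H : Matrix (Fin n) (Fin h) ℝ)
    (L : Matrix (Fin n) (Fin n) ℝ)
    (hL : L = Matrix.diagonal (fun i => ∑ j, A i j) - A)
    (Dtsqrt : Matrix (Fin n) (Fin n) ℝ)
    (hDtsqrt : Dtsqrt = Matrix.diagonal (fun i => Real.sqrt ((∑ j, A i j) + 1)))
    (S : Matrix (Fin n) (Fin n) ℝ)
    (hS : S = Matrix.diagonal (fun i => 1 / Real.sqrt ((∑ j, A i j) + 1)) * (A + 1) *
      Matrix.diagonal (fun i => 1 / Real.sqrt ((∑ j, A i j) + 1)))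
    (F : Matrix (Fin n) (Fin h) ℝ → ℝ)
    (hF : ∀ Y : Matrix (Fin n) (Fin h) ℝ,
      F Y = (1 - β) * Matrix.trace (Yᵀ * L * Y) +
        β * Matrix.trace ((Dtsqrt * Y - H)ᵀ * (Dtsqrt * Y - H)))
    (Ystar : Matrix (Fin n) (Fin h) ℝ)
    (hYstar : ∀ Y : Matrix (Fin n) (Fin h) ℝ, F Ystar ≤ F Y) :
    ((1 : Matrix (Fin n) (Fin n) ℝ) - (1 - β) • S) * (Dtsqrt * Ystar) = β • H ∧
    ∀ Z : Matrix (Fin n) (Fin h) ℝ,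
      ((1 : Matrix (Fin n) (Fin n) ℝ) - (1 - β) • S) * Z = β • H → Z = Dtsqrt * Ystar := by
  subst hL
  have hd : ∀ i, 0 < ∑ j, A i j + 1 := fun i =>
    add_pos_of_nonneg_of_pos (Finset.sum_nonneg fun j _ => hA_nonneg i j) one_pos
  set M := (1 - β) • (diagonal (fun i => ∑ j, A i j) - A) +
    β • diagonal (fun i => ∑ j, A i j + 1)
  have hM : M.PosDef := posDef_smul_diagonal_sum_sub_add_smul_diagonal hA_symm hA_nonneg hβ
  have hDt_symm : Dtsqrtᵀ = Dtsqrt := hDtsqrt ▸ diagonal_transpose _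
  have hDt_sq : Dtsqrtᵀ * Dtsqrt = diagonal (fun i => ∑ j, A i j + 1) := by
    rw [hDt_symm, hDtsqrt, diagonal_mul_diagonal]
    exact congrArg diagonal (funext fun i => Real.mul_self_sqrt (hd i).le)
  have hMY : M * Ystar = β • (Dtsqrt * H) := by
    refine hDt_symm ▸ hM.mul_eq_of_forall_le fun Y => ?_
    have := hYstar Y
    rw [hF, hF, trace_objective_eq_quadratic, trace_objective_eq_quadratic, hDt_sq] at this
    exact (add_le_add_iff_right _).mp this
  set R := diagonal (fun i => 1 / √(∑ j, A i j + 1))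
  have hRD : R * Dtsqrt = 1 := by
    rw [hDtsqrt, diagonal_mul_diagonal, ← diagonal_one]
    exact congrArg diagonal (funext fun i => one_div_mul_cancel (Real.sqrt_pos.mpr (hd i)).ne')
  have hR : IsUnit R := isUnit_diagonal.mpr (Pi.isUnit_iff.mpr fun i =>
    (one_div_pos.mpr (Real.sqrt_pos.mpr (hd i))).ne'.isUnit)
  have hK : 1 - (1 - β) • S = R * M * R := by
    rw [hS]
    exact (diagonal_inv_sqrt_conj_eq_one_sub_smul (A := A) _ hd β).symm
  have hsol : (1 - (1 - β) • S) * (Dtsqrt * Ystar) = β • H := by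
    rw [hK, Matrix.mul_assoc, Matrix.mul_assoc, ← Matrix.mul_assoc R Dtsqrt, hRD, Matrix.one_mul,
      hMY, Matrix.mul_smul, ← Matrix.mul_assoc, hRD, Matrix.one_mul]
  have := (hK ▸ (hR.mul hM.isUnit).mul hR : IsUnit (1 - (1 - β) • S)).invertible
  exact ⟨hsol, fun Z hZ => mul_right_injective_of_invertible _ (hZ.trans hsol.symm)⟩
end

section
/- Fix β ∈ (0,1], H ∈ ℝ^{n×h}, and V ∈ ℝ^{n×k} with orthonormal columns (Vᵀ V = I_k). Consider the reduced objective G(R) = (1−β) Tr(Rᵀ (Vᵀ L V) R) + β ‖D̃^{1/2} V R − H‖_F² over R ∈ ℝ^{k×h}. If R* is a minimizer of G, then Z* = D̃_V^{1/2} R* is the unique solution of the linear system (I − (1−β) D̃_V^{-1/2} Ã_V D̃_V^{-1/2}) Z = β D̃_V^{-1/2} Vᵀ D̃^{1/2} H, where Ã_V = Vᵀ Ã V and D̃_V = Vᵀ D̃ V. -/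
/-! Writing `W = D̃^{1/2} V`, so that `WᵀW = D̃_V = S²`, the objective becomes the quadratic
`tr(RᵀMR) − 2β tr(Rᵀ Vᵀ D̃^{1/2} H) + const` with `M = (1−β) VᵀLV + β S²`. The weighted
Laplacian is positive semidefinite, so `M` is positive definite and a minimizer satisfies the
normal equation `M R* = β Vᵀ D̃^{1/2} H`. Since `L = D̃ − Ã`, `M = S² − (1−β) Ã_V`, and the
system in the theorem is the normal equation conjugated by `S⁻¹`: its matrix is
`S⁻¹ M S⁻¹`, which is invertible. -/

open Matrix

section Laplacian

variable {ι : Type*} [Fintype ι] [DecidableEq ι]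

theorem dotProduct_diagonal_rowSum_sub_mulVec {A : Matrix ι ι ℝ} (hA : Aᵀ = A) (x : ι → ℝ) :
    x ⬝ᵥ ((diagonal fun i => ∑ j, A i j) - A) *ᵥ x
      = (∑ i, ∑ j, A i j * (x i - x j) ^ 2) / 2 := by
  have hswap : ∑ i, ∑ j, A i j * x j ^ 2 = ∑ i, ∑ j, A i j * x i ^ 2 := by
    rw [Finset.sum_comm]
    refine Finset.sum_congr rfl fun i _ => Finset.sum_congr rfl fun j _ => ?_
    rw [← transpose_apply A i j, hA]
  have hexpand : ∑ i, ∑ j, A i j * (x i - x j) ^ 2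
      = ∑ i, ∑ j, A i j * x i ^ 2 - 2 * ∑ i, ∑ j, A i j * (x i * x j)
        + ∑ i, ∑ j, A i j * x j ^ 2 := by
    simp only [Finset.mul_sum, ← Finset.sum_sub_distrib, ← Finset.sum_add_distrib]
    exact Finset.sum_congr rfl fun i _ => Finset.sum_congr rfl fun j _ => by ring
  have hquad : x ⬝ᵥ ((diagonal fun i => ∑ j, A i j) - A) *ᵥ x
      = ∑ i, ∑ j, A i j * x i ^ 2 - ∑ i, ∑ j, A i j * (x i * x j) := by
    rw [sub_mulVec, dotProduct_sub]
    simp only [dotProduct, mulVec_diagonal]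
    simp only [mulVec, dotProduct, Finset.mul_sum, Finset.sum_mul]
    congr 1 <;> exact Finset.sum_congr rfl fun i _ => Finset.sum_congr rfl fun j _ => by ring
  rw [hquad, hexpand, hswap]
  ring

theorem posSemidef_diagonal_rowSum_sub {A : Matrix ι ι ℝ} (hA_symm : Aᵀ = A)
    (hA_nonneg : ∀ i j, 0 ≤ A i j) : ((diagonal fun i => ∑ j, A i j) - A).PosSemidef := by
  refine .of_dotProduct_mulVec_nonneg ?_ fun x => ?_
  · rw [IsHermitian, conjTranspose_eq_transpose_of_trivial, transpose_sub, diagonal_transpose,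
      hA_symm]
  · rw [star_trivial, dotProduct_diagonal_rowSum_sub_mulVec hA_symm]
    exact div_nonneg (Finset.sum_nonneg fun i _ => Finset.sum_nonneg fun j _ =>
      mul_nonneg (hA_nonneg i j) (sq_nonneg _)) zero_le_two

end Laplacian

theorem transpose_diagonal_sqrt_mul_self {ι : Type*} [Fintype ι] [DecidableEq ι] {d : ι → ℝ}
    (hd : ∀ i, 0 ≤ d i) :
    (diagonal fun i => √(d i))ᵀ * diagonal (fun i => √(d i)) = diagonal d := by
  rw [diagonal_transpose, diagonal_mul_diagonal]
  exact congrArg diagonal (funext fun i => Real.mul_self_sqrt (hd i))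

section Quadratic

variable {m n p : Type*} [Fintype m] [Fintype n] [Fintype p]

theorem trace_transpose_mul_comm {R : Type*} [CommRing R]
    (X Y : Matrix m p R) : trace (Xᵀ * Y) = trace (Yᵀ * X) := by
  rw [← trace_transpose, transpose_mul, transpose_transpose]

theorem trace_transpose_sub_mul_sub {R : Type*} [CommRing R] (W : Matrix n m R)
    (X : Matrix m p R) (H : Matrix n p R) :
    trace ((W * X - H)ᵀ * (W * X - H))
      = trace (Xᵀ * (Wᵀ * W) * X) - 2 * trace (Xᵀ * (Wᵀ * H)) + trace (Hᵀ * H) := by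
  have hcross : trace (Hᵀ * (W * X)) = trace (Xᵀ * (Wᵀ * H)) := by
    rw [trace_transpose_mul_comm, transpose_mul, Matrix.mul_assoc]
  simp only [transpose_sub, Matrix.sub_mul, Matrix.mul_sub, trace_sub, transpose_mul,
    Matrix.mul_assoc, hcross]
  ring

theorem trace_transpose_add_smul_mul_mul_add_smul {M : Matrix m m ℝ} (hM : Mᵀ = M)
    (X P : Matrix m p ℝ) (t : ℝ) :
    trace ((X + t • P)ᵀ * M * (X + t • P))
      = trace (Xᵀ * M * X) + 2 * t * trace (Pᵀ * M * X) + t ^ 2 * trace (Pᵀ * M * P) := by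
  have hcross : trace (Xᵀ * M * P) = trace (Pᵀ * M * X) := by
    rw [Matrix.mul_assoc, trace_transpose_mul_comm, transpose_mul, hM, Matrix.mul_assoc]
  simp only [transpose_add, transpose_smul, Matrix.add_mul, Matrix.mul_add, Matrix.smul_mul,
    Matrix.mul_smul, trace_add, trace_smul, smul_eq_mul, hcross]
  ring

theorem mul_eq_of_isMinOn_trace_quadratic {M : Matrix m m ℝ} (hM : Mᵀ = M)
    {B X : Matrix m p ℝ} {f : Matrix m p ℝ → ℝ} {c : ℝ}
    (hf : ∀ Y, f Y = trace (Yᵀ * M * Y) - 2 * trace (Yᵀ * B) + c) (hX : IsMinOn f Set.univ X) :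
    M * X = B := by
  rw [isMinOn_univ_iff] at hX
  set P := M * X - B
  -- Along `X + t P`, `f` grows by `t² tr(PᵀMP) + 2t tr(PᵀP)`; this stays nonnegative for all `t`
  -- only if the linear coefficient vanishes.
  have hline : ∀ t : ℝ, 0 ≤ trace (Pᵀ * M * P) * (t * t) + 2 * trace (Pᵀ * P) * t + 0 := by
    intro t
    have := hX (X + t • P)
    rw [hf, hf, trace_transpose_add_smul_mul_mul_add_smul hM] at this
    have hlin : trace ((X + t • P)ᵀ * B) = trace (Xᵀ * B) + t * trace (Pᵀ * B) := by
      rw [transpose_add, transpose_smul, Matrix.add_mul, Matrix.smul_mul, trace_add, trace_smul,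
        smul_eq_mul]
    have hP : trace (Pᵀ * P) = trace (Pᵀ * M * X) - trace (Pᵀ * B) := by
      rw [Matrix.mul_sub, trace_sub, Matrix.mul_assoc]
    rw [hlin] at this
    rw [hP]
    nlinarith
  have hdisc := discrim_le_zero hline
  rw [discrim, mul_zero, sub_zero] at hdisc
  have hzero : trace (Pᵀ * P) = 0 := by nlinarith [sq_nonneg (trace (Pᵀ * P))]
  rw [← conjTranspose_eq_transpose_of_trivial, trace_conjTranspose_mul_self_eq_zero_iff] at hzero
  exact sub_eq_zero.mp hzero

theorem trace_weighted_least_squares_eq {R : Type*} [CommRing R] (a b : R) (K : Matrix m m R)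
    (W : Matrix n m R) (X : Matrix m p R) (H : Matrix n p R) :
    a * trace (Xᵀ * K * X) + b * trace ((W * X - H)ᵀ * (W * X - H))
      = trace (Xᵀ * (a • K + b • (Wᵀ * W)) * X) - 2 * trace (Xᵀ * (b • (Wᵀ * H)))
        + b * trace (Hᵀ * H) := by
  simp only [trace_transpose_sub_mul_sub, Matrix.mul_add, Matrix.add_mul, Matrix.mul_smul,
    Matrix.smul_mul, trace_add, trace_smul, smul_eq_mul]
  ring

end Quadratic

open scoped ComplexOrder in
theorem Matrix.PosDef.mul_self {m K : Type*} [Fintype m] [DecidableEq m] [RCLike K]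
    {S : Matrix m m K} (hS : S.PosDef) : (S * S).PosDef := by
  simpa only [hS.isHermitian.eq] using
    PosDef.conjTranspose_mul_self S (mulVec_injective_of_isUnit hS.isUnit)

section Rescaling

variable {m p K : Type*} [Fintype m] [DecidableEq m] [Field K] {S : Matrix m m K}

theorem inv_mul_sub_smul_mul_inv (hS : IsUnit S) (c : K) (N : Matrix m m K) :
    S⁻¹ * (S * S - c • N) * S⁻¹ = 1 - c • (S⁻¹ * N * S⁻¹) := by
  rw [isUnit_iff_isUnit_det] at hS
  rw [Matrix.mul_sub, Matrix.sub_mul, ← Matrix.mul_assoc, nonsing_inv_mul S hS, Matrix.one_mul,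
    mul_nonsing_inv S hS, Matrix.mul_smul, Matrix.smul_mul]

theorem inv_mul_mul_inv_mul_eq_inv_mul_iff {M : Matrix m m K} {X Y : Matrix m p K}
    (hS : IsUnit S) (hM : IsUnit M) (hMX : M * X = Y) (Z : Matrix m p K) :
    S⁻¹ * M * S⁻¹ * Z = S⁻¹ * Y ↔ Z = S * X := by
  rw [isUnit_iff_isUnit_det] at hS hM
  have hsol : S⁻¹ * M * S⁻¹ * (S * X) = S⁻¹ * Y := by
    rw [Matrix.mul_assoc, nonsing_inv_mul_cancel_left _ _ hS, Matrix.mul_assoc, hMX]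
  have hT : IsUnit (S⁻¹ * M * S⁻¹).det := by
    rw [det_mul, det_mul]
    exact ((isUnit_nonsing_inv_det S hS).mul hM).mul (isUnit_nonsing_inv_det S hS)
  refine ⟨fun hZ => ?_, fun hZ => hZ ▸ hsol⟩
  rw [← nonsing_inv_mul_cancel_left _ Z hT, hZ, ← hsol, nonsing_inv_mul_cancel_left _ _ hT]

end Rescaling

theorem stmt_3_general {n k h : ℕ} (A : Matrix (Fin n) (Fin n) ℝ)
    (hA_symm : Aᵀ = A) (hA_nonneg : ∀ i j, 0 ≤ A i j)
    (β : ℝ) (hβ : β ∈ Set.Ioc (0 : ℝ) 1)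
    (H : Matrix (Fin n) (Fin h) ℝ)
    (V : Matrix (Fin n) (Fin k) ℝ)
    (L : Matrix (Fin n) (Fin n) ℝ)
    (hL : L = Matrix.diagonal (fun i => ∑ j, A i j) - A)
    (Dtsqrt : Matrix (Fin n) (Fin n) ℝ)
    (hDtsqrt : Dtsqrt = Matrix.diagonal (fun i => Real.sqrt ((∑ j, A i j) + 1)))
    (S : Matrix (Fin k) (Fin k) ℝ) (hSpos : S.PosDef)
    (hSsq : S * S = Vᵀ * (Matrix.diagonal (fun i => ∑ j, A i j) + 1) * V)
    (G : Matrix (Fin k) (Fin h) ℝ → ℝ)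
    (hG : ∀ R : Matrix (Fin k) (Fin h) ℝ,
      G R = (1 - β) * Matrix.trace (Rᵀ * (Vᵀ * L * V) * R) +
        β * Matrix.trace ((Dtsqrt * V * R - H)ᵀ * (Dtsqrt * V * R - H)))
    (Rstar : Matrix (Fin k) (Fin h) ℝ)
    (hRstar : ∀ R : Matrix (Fin k) (Fin h) ℝ, G Rstar ≤ G R) :
    ((1 : Matrix (Fin k) (Fin k) ℝ) - (1 - β) • (S⁻¹ * (Vᵀ * (A + 1) * V) * S⁻¹)) *
        (S * Rstar) = β • (S⁻¹ * (Vᵀ * Dtsqrt * H)) ∧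
    ∀ Z : Matrix (Fin k) (Fin h) ℝ,
      ((1 : Matrix (Fin k) (Fin k) ℝ) - (1 - β) • (S⁻¹ * (Vᵀ * (A + 1) * V) * S⁻¹)) * Z
          = β • (S⁻¹ * (Vᵀ * Dtsqrt * H)) → Z = S * Rstar := by
  obtain ⟨hβ0, hβ1⟩ := hβ
  have hLV : (Vᵀ * L * V).PosSemidef :=
    (hL ▸ posSemidef_diagonal_rowSum_sub hA_symm hA_nonneg).conjTranspose_mul_mul_same V
  set M := (1 - β) • (Vᵀ * L * V) + β • (S * S)
  have hM : M.PosDef :=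
    PosDef.posSemidef_add (hLV.smul (sub_nonneg.2 hβ1)) (hSpos.mul_self.smul hβ0)
  have hDtsqrt_symm : Dtsqrtᵀ = Dtsqrt := by rw [hDtsqrt, diagonal_transpose]
  have hWW : (Dtsqrt * V)ᵀ * (Dtsqrt * V) = S * S := by
    have hdeg : ∀ i, 0 ≤ (∑ j, A i j) + 1 := fun i =>
      add_nonneg (Finset.sum_nonneg fun j _ => hA_nonneg i j) zero_le_one
    rw [hSsq, transpose_mul, Matrix.mul_assoc, ← Matrix.mul_assoc Dtsqrtᵀ, hDtsqrt,
      transpose_diagonal_sqrt_mul_self hdeg, ← diagonal_one, diagonal_add, Matrix.mul_assoc]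
  have hnormal : M * Rstar = β • (Vᵀ * Dtsqrt * H) := by
    refine mul_eq_of_isMinOn_trace_quadratic (M := M) (c := β * trace (Hᵀ * H)) hM.isHermitian
      (fun R => ?_) (isMinOn_univ_iff.mpr hRstar)
    rw [hG, trace_weighted_least_squares_eq, hWW, transpose_mul, hDtsqrt_symm]
  have hM_eq : S * S - (1 - β) • (Vᵀ * (A + 1) * V) = M := by
    have hLV_eq : Vᵀ * L * V = S * S - Vᵀ * (A + 1) * V := by
      rw [hL, hSsq, ← Matrix.sub_mul, ← Matrix.mul_sub, add_sub_add_right_eq_sub]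
    simp only [M, hLV_eq]
    module
  have hsystem := inv_mul_mul_inv_mul_eq_inv_mul_iff hSpos.isUnit hM.isUnit hnormal
  rw [← inv_mul_sub_smul_mul_inv hSpos.isUnit, hM_eq, ← Matrix.mul_smul]
  exact ⟨(hsystem _).2 rfl, fun Z => (hsystem Z).1⟩

/-- Fix β ∈ (0,1], H ∈ ℝ^{n×h}, and V ∈ ℝ^{n×k} with orthonormal
columns.  Consider the reduced objective
G(R) = (1−β) Tr(Rᵀ (Vᵀ L V) R) + β ‖D̃^{1/2} V R − H‖_F² over R ∈ ℝ^{k×h}.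
If R* minimizes G, then Z* = D̃_V^{1/2} R* is the unique solution of the linear
system (I − (1−β) D̃_V^{-1/2} Ã_V D̃_V^{-1/2}) Z = β D̃_V^{-1/2} Vᵀ D̃^{1/2} H,
where Ã_V = Vᵀ Ã V and D̃_V = Vᵀ D̃ V.  Here S denotes the (unique)
positive-definite square root D̃_V^{1/2} of D̃_V, so S⁻¹ = D̃_V^{-1/2}. -/
theorem stmt_3 {n k h : ℕ} (A : Matrix (Fin n) (Fin n) ℝ)
    (hA_symm : Aᵀ = A) (hA_nonneg : ∀ i j, 0 ≤ A i j)
    (β : ℝ) (hβ : β ∈ Set.Ioc (0 : ℝ) 1)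
    (H : Matrix (Fin n) (Fin h) ℝ)
    (V : Matrix (Fin n) (Fin k) ℝ) (hV : Vᵀ * V = 1)
    (L : Matrix (Fin n) (Fin n) ℝ)
    (hL : L = Matrix.diagonal (fun i => ∑ j, A i j) - A)
    (Dtsqrt : Matrix (Fin n) (Fin n) ℝ)
    (hDtsqrt : Dtsqrt = Matrix.diagonal (fun i => Real.sqrt ((∑ j, A i j) + 1)))
    (S : Matrix (Fin k) (Fin k) ℝ) (hSpos : S.PosDef)
    (hSsq : S * S = Vᵀ * (Matrix.diagonal (fun i => ∑ j, A i j) + 1) * V)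
    (G : Matrix (Fin k) (Fin h) ℝ → ℝ)
    (hG : ∀ R : Matrix (Fin k) (Fin h) ℝ,
      G R = (1 - β) * Matrix.trace (Rᵀ * (Vᵀ * L * V) * R) +
        β * Matrix.trace ((Dtsqrt * V * R - H)ᵀ * (Dtsqrt * V * R - H)))
    (Rstar : Matrix (Fin k) (Fin h) ℝ)
    (hRstar : ∀ R : Matrix (Fin k) (Fin h) ℝ, G Rstar ≤ G R) :
    ((1 : Matrix (Fin k) (Fin k) ℝ) - (1 - β) • (S⁻¹ * (Vᵀ * (A + 1) * V) * S⁻¹)) *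
        (S * Rstar) = β • (S⁻¹ * (Vᵀ * Dtsqrt * H)) ∧
    ∀ Z : Matrix (Fin k) (Fin h) ℝ,
      ((1 : Matrix (Fin k) (Fin k) ℝ) - (1 - β) • (S⁻¹ * (Vᵀ * (A + 1) * V) * S⁻¹)) * Z
          = β • (S⁻¹ * (Vᵀ * Dtsqrt * H)) → Z = S * Rstar :=
  stmt_3_general A hA_symm hA_nonneg β hβ H V L hL Dtsqrt hDtsqrt S hSpos hSsq G hG Rstar hRstar
end

section
/- Fix β ∈ (0,1], H ∈ ℝ^{n×h}, and V ∈ ℝ^{n×k} with orthonormal columns (Vᵀ V = I_k). Let H' = D̃_V^{-1/2} Vᵀ D̃^{1/2} H, and define the sequence Z^{(1)} = H' and Z^{(k+1)} = (1−β) D̃_V^{-1/2} Ã_V D̃_V^{-1/2} Z^{(k)} + β H', where Ã_V = Vᵀ Ã V and D̃_V = Vᵀ D̃ V. Then Z^{(k)} converges as k → ∞ to the unique solution Z* of the linear system (I − (1−β) D̃_V^{-1/2} Ã_V D̃_V^{-1/2}) Z = β H'. -/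
/-!
Write `N = S⁻¹ Ã_V S⁻¹` and `P = V S⁻¹`. Since `S² = Vᵀ D̃ V` we have `Pᵀ D̃ P = 1`, hence
`1 - N = Pᵀ (D - A) P` and `1 + N = Pᵀ (D + A + 2) P`. Both `D - A` and `D + A` are diagonally
dominant with nonnegative diagonal, so by Gershgorin they are positive semidefinite, and so
are `1 ∓ N`. Then `2 (1 - N²) = (1 + N)(1 - N)(1 + N) + (1 - N)(1 + N)(1 - N) ⪰ 0`, i.e.
`‖N‖ ≤ 1` in the operator norm, so the iteration matrix `(1 - β) N` has norm `< 1` and its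
powers tend to zero. This makes `1 - (1 - β) N` invertible, and the error `Z t - Z*` equals
`((1 - β) N) ^ t (Z 0 - Z*)`.
-/

open Matrix Filter Topology
open scoped ComplexOrder

namespace Matrix

section AffineIteration

variable {K n m : Type*} [Field K] [TopologicalSpace K] [IsTopologicalRing K] [T2Space K]
  [Fintype n] [DecidableEq n]

theorem isUnit_one_sub_of_tendsto_pow {M : Matrix n n K}
    (hM : Tendsto (M ^ ·) atTop (𝓝 0)) : IsUnit (1 - M) := by
  refine mulVec_injective_iff_isUnit.1 fun v w hvw => sub_eq_zero.1 ?_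
  have hMfix : M *ᵥ (v - w) = v - w := by
    have h0 : (1 - M) *ᵥ (v - w) = 0 := by rw [mulVec_sub, hvw, sub_self]
    rw [sub_mulVec, one_mulVec, sub_eq_zero] at h0
    exact h0.symm
  have hpow_fix (t : ℕ) : M ^ t *ᵥ (v - w) = v - w := by
    induction t with
    | zero => simp
    | succ t ih => rw [pow_succ, ← mulVec_mulVec, hMfix, ih]
  have hlim := ((continuous_id.matrix_mulVec (continuous_const (y := v - w))).tendsto 0).comp hM
  exact tendsto_nhds_unique (tendsto_const_nhds.congr fun t => (hpow_fix t).symm)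
    (by simpa [Function.comp_def] using hlim)

theorem exists_unique_solution_tendsto_of_tendsto_pow {M : Matrix n n K}
    (hM : Tendsto (M ^ ·) atTop (𝓝 0)) (c : Matrix n m K) (Z : ℕ → Matrix n m K)
    (hZ : ∀ t, Z (t + 1) = M * Z t + c) :
    ∃ Zstar, (∀ W, (1 - M) * W = c ↔ W = Zstar) ∧ Tendsto Z atTop (𝓝 Zstar) := by
  have hdet := (isUnit_iff_isUnit_det _).1 (isUnit_one_sub_of_tendsto_pow hM)
  set Zstar := (1 - M)⁻¹ * c
  have hfix : M * Zstar + c = Zstar := by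
    have h : (1 - M) * Zstar = c := mul_nonsing_inv_cancel_left _ _ hdet
    rw [Matrix.sub_mul, Matrix.one_mul] at h
    rw [← h]
    abel
  have herr (t : ℕ) : Z t - Zstar = M ^ t * (Z 0 - Zstar) := by
    induction t with
    | zero => simp
    | succ t ih =>
      conv_lhs => rw [hZ, ← hfix]
      rw [pow_succ', Matrix.mul_assoc, ← ih, Matrix.mul_sub]
      abel
  refine ⟨Zstar, fun W => ⟨fun hW => ?_, fun hW => ?_⟩, ?_⟩
  · rw [← nonsing_inv_mul_cancel_left _ W hdet, hW]
  · rw [hW, mul_nonsing_inv_cancel_left _ _ hdet]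
  · have hlim :=
      ((continuous_id.matrix_mul (continuous_const (y := Z 0 - Zstar))).tendsto 0).comp hM
    simpa using (hlim.congr fun t => (herr t).symm).add_const Zstar

end AffineIteration

section Contraction

variable {n 𝕜 : Type*} [Fintype n] [DecidableEq n] [RCLike 𝕜]

theorem IsHermitian.posSemidef_one_sub_mul_self {N : Matrix n n 𝕜} (hN : N.IsHermitian)
    (h₁ : (1 - N).PosSemidef) (h₂ : (1 + N).PosSemidef) : (1 - N * N).PosSemidef := by
  have hsum :=
    (h₁.conjTranspose_mul_mul_same (1 + N)).add (h₂.conjTranspose_mul_mul_same (1 - N))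
  have hid : (1 + N)ᴴ * (1 - N) * (1 + N) + (1 - N)ᴴ * (1 + N) * (1 - N)
      = (2 : ℝ) • (1 - N * N) := by
    simp only [conjTranspose_add, conjTranspose_sub, conjTranspose_one, hN.eq, two_smul]
    noncomm_ring
  rw [hid] at hsum
  simpa using hsum.smul (a := (2⁻¹ : ℝ)) (by norm_num)

open scoped Matrix.Norms.L2Operator in
theorem l2_opNorm_le_one_of_posSemidef {N : Matrix n n 𝕜} (h : (1 - Nᴴ * N).PosSemidef) :
    ‖N‖ ≤ 1 := by
  rw [cstar_norm_def]
  refine ContinuousLinearMap.opNorm_le_bound _ zero_le_one fun x => ?_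
  rw [one_mul, ← sq_le_sq₀ (norm_nonneg _) (norm_nonneg _), norm_sq_eq_re_inner (𝕜 := 𝕜),
    norm_sq_eq_re_inner (𝕜 := 𝕜), EuclideanSpace.inner_eq_star_dotProduct,
    EuclideanSpace.inner_eq_star_dotProduct, ofLp_toEuclideanCLM,
    dotProduct_comm, dotProduct_comm x.ofLp]
  have hx := h.dotProduct_mulVec_nonneg x.ofLp
  rw [sub_mulVec, one_mulVec, dotProduct_sub, ← mulVec_mulVec, dotProduct_mulVec,
    ← star_mulVec, sub_nonneg, RCLike.le_iff_re_im] at hx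
  exact hx.1

open scoped Matrix.Norms.L2Operator in
theorem IsHermitian.tendsto_pow_smul {N : Matrix n n 𝕜} (hN : N.IsHermitian)
    (h₁ : (1 - N).PosSemidef) (h₂ : (1 + N).PosSemidef) {r : 𝕜} (hr : ‖r‖ < 1) :
    Tendsto (fun t => (r • N) ^ t) atTop (𝓝 0) := by
  have hN1 : ‖N‖ ≤ 1 :=
    l2_opNorm_le_one_of_posSemidef (hN.eq.symm ▸ hN.posSemidef_one_sub_mul_self h₁ h₂)
  refine tendsto_pow_atTop_nhds_zero_of_norm_lt_one ((norm_smul_le r N).trans_lt ?_)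
  nlinarith [norm_nonneg r, norm_nonneg N]

theorem conjTranspose_mul_inv_mul_mul_inv {m k : Type*} [Fintype m] [Fintype k] [DecidableEq k]
    {S : Matrix k k 𝕜} (hS : S.IsHermitian) (V : Matrix m k 𝕜) (X : Matrix m m 𝕜) :
    (V * S⁻¹)ᴴ * X * (V * S⁻¹) = S⁻¹ * (Vᴴ * X * V) * S⁻¹ := by
  rw [conjTranspose_mul, conjTranspose_nonsing_inv, hS.eq]
  simp only [Matrix.mul_assoc]

end Contraction

section WeightedGraph

variable {n k : Type*} [Fintype n] [DecidableEq n] [Fintype k] [DecidableEq k]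

theorem IsHermitian.posSemidef_of_sum_abs_le_diag {A : Matrix n n ℝ} (hA : A.IsHermitian)
    (hdom : ∀ i, ∑ j ∈ Finset.univ.erase i, |A i j| ≤ A i i) : A.PosSemidef := by
  refine hA.posSemidef_iff_eigenvalues_nonneg.2 fun i => ?_
  have hμ : Module.End.HasEigenvalue (toLin' A) (hA.eigenvalues i) := by
    rw [Module.End.hasEigenvalue_iff_mem_spectrum, spectrum_toLin']
    exact hA.eigenvalues_mem_spectrum_real i
  obtain ⟨l, hl⟩ := eigenvalue_mem_ball hμ
  rw [Metric.mem_closedBall, Real.dist_eq] at hl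
  simp only [Real.norm_eq_abs] at hl
  have hneg := neg_abs_le (hA.eigenvalues i - A l l)
  simp only [Pi.zero_apply]
  linarith [hdom l]

theorem posSemidef_diagonal_sum_add_smul {A : Matrix n n ℝ} (hA : A.IsHermitian)
    (hA_nonneg : ∀ i j, 0 ≤ A i j) {s : ℝ} (hs : |s| ≤ 1) :
    (diagonal (fun i => ∑ j, A i j) + s • A).PosSemidef := by
  have hherm := (isHermitian_diagonal fun i => ∑ j, A i j).add (hA.smul (IsSelfAdjoint.all s))
  refine hherm.posSemidef_of_sum_abs_le_diag fun i => ?_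
  have hoff : ∀ j ∈ Finset.univ.erase i,
      |(diagonal (fun i => ∑ j, A i j) + s • A) i j| ≤ A i j := fun j hj => by
    rw [add_apply, diagonal_apply_ne _ (Finset.ne_of_mem_erase hj).symm, zero_add, smul_apply,
      smul_eq_mul, abs_mul, abs_of_nonneg (hA_nonneg i j)]
    exact mul_le_of_le_one_left (hA_nonneg i j) hs
  have hrow := Finset.add_sum_erase Finset.univ (A i) (Finset.mem_univ i)
  have hdiag : -A i i ≤ s * A i i := by nlinarith [neg_abs_le s, hA_nonneg i i]
  calc _ ≤ ∑ j ∈ Finset.univ.erase i, A i j := Finset.sum_le_sum hoff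
    _ ≤ _ := by simp only [add_apply, diagonal_apply_eq, smul_apply, smul_eq_mul]; linarith

theorem tendsto_pow_smul_inv_mul_mul_inv {A : Matrix n n ℝ} (hA : A.IsHermitian)
    (hA_nonneg : ∀ i j, 0 ≤ A i j) {V : Matrix n k ℝ} {S : Matrix k k ℝ} (hS : S.PosDef)
    (hSsq : S * S = Vᵀ * (diagonal (fun i => ∑ j, A i j) + 1) * V) {r : ℝ} (hr : |r| < 1) :
    Tendsto (fun t => (r • (S⁻¹ * (Vᵀ * (A + 1) * V) * S⁻¹)) ^ t) atTop (𝓝 0) := by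
  set D := diagonal (fun i => ∑ j, A i j)
  set P := V * S⁻¹
  have hdet : IsUnit S.det := (isUnit_iff_isUnit_det S).1 hS.isUnit
  have hconj (X : Matrix n n ℝ) : Pᴴ * X * P = S⁻¹ * (Vᵀ * X * V) * S⁻¹ :=
    conjTranspose_mul_inv_mul_mul_inv hS.isHermitian V X
  have hdeg : Pᴴ * (D + 1) * P = 1 := by
    rw [hconj, ← hSsq, nonsing_inv_mul_cancel_left _ _ hdet, mul_nonsing_inv _ hdet]
  have hPSD (s : ℝ) (hs : |s| ≤ 1) := posSemidef_diagonal_sum_add_smul hA hA_nonneg hs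
  rw [← hconj]
  refine IsHermitian.tendsto_pow_smul (isHermitian_conjTranspose_mul_mul P (hA.add isHermitian_one))
    ?_ ?_ hr
  · have h : D + (-1 : ℝ) • A = (D + 1) - (A + 1) := by rw [neg_one_smul]; abel
    rw [← hdeg, ← Matrix.sub_mul, ← Matrix.mul_sub, ← h]
    exact (hPSD (-1) (by simp)).conjTranspose_mul_mul_same P
  · have h : D + (1 : ℝ) • A + (1 + 1) = (D + 1) + (A + 1) := by rw [one_smul]; abel
    rw [← hdeg, ← Matrix.add_mul, ← Matrix.mul_add, ← h]
    exact ((hPSD 1 (by simp)).add (PosSemidef.one.add PosSemidef.one)).conjTranspose_mul_mul_same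
      P

end WeightedGraph

end Matrix

theorem stmt_4_general {n k h : ℕ} (A : Matrix (Fin n) (Fin n) ℝ)
    (hA_symm : Aᵀ = A) (hA_nonneg : ∀ i j, 0 ≤ A i j)
    (β : ℝ) (hβ : β ∈ Set.Ioc (0 : ℝ) 1)
    (V : Matrix (Fin n) (Fin k) ℝ)
    (S : Matrix (Fin k) (Fin k) ℝ) (hSpos : S.PosDef)
    (hSsq : S * S = Vᵀ * (Matrix.diagonal (fun i => ∑ j, A i j) + 1) * V)
    (H' : Matrix (Fin k) (Fin h) ℝ)
    (Z : ℕ → Matrix (Fin k) (Fin h) ℝ)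
    (hZrec : ∀ t : ℕ,
      Z (t + 1) = (1 - β) • (S⁻¹ * (Vᵀ * (A + 1) * V) * S⁻¹ * Z t) + β • H') :
    ∃ Zstar : Matrix (Fin k) (Fin h) ℝ,
      (∀ W : Matrix (Fin k) (Fin h) ℝ,
        ((1 : Matrix (Fin k) (Fin k) ℝ) - (1 - β) • (S⁻¹ * (Vᵀ * (A + 1) * V) * S⁻¹)) * W
            = β • H' ↔ W = Zstar) ∧
      Tendsto Z atTop (𝓝 Zstar) := by
  obtain ⟨hβ0, hβ1⟩ := hβ
  have hr : |1 - β| < 1 := abs_lt.2 ⟨by linarith, by linarith⟩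
  have hpow := tendsto_pow_smul_inv_mul_mul_inv (isHermitian_iff_isSymm.2 hA_symm) hA_nonneg
    hSpos hSsq hr
  exact exists_unique_solution_tendsto_of_tendsto_pow hpow (β • H') Z fun t => by
    rw [hZrec, Matrix.smul_mul]

/-- Fix β ∈ (0,1], H ∈ ℝ^{n×h}, and V ∈ ℝ^{n×k} with orthonormal
columns.  Let H' = D̃_V^{-1/2} Vᵀ D̃^{1/2} H, and define Z^{(1)} = H' and
Z^{(k+1)} = (1−β) D̃_V^{-1/2} Ã_V D̃_V^{-1/2} Z^{(k)} + β H', where Ã_V = Vᵀ Ã V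
and D̃_V = Vᵀ D̃ V.  Then Z^{(k)} converges to the unique solution Z* of
(I − (1−β) D̃_V^{-1/2} Ã_V D̃_V^{-1/2}) Z = β H'.  Here S denotes the (unique)
positive-definite square root D̃_V^{1/2} of D̃_V, so S⁻¹ = D̃_V^{-1/2}. -/
theorem stmt_4 {n k h : ℕ} (A : Matrix (Fin n) (Fin n) ℝ)
    (hA_symm : Aᵀ = A) (hA_nonneg : ∀ i j, 0 ≤ A i j)
    (β : ℝ) (hβ : β ∈ Set.Ioc (0 : ℝ) 1)
    (H : Matrix (Fin n) (Fin h) ℝ)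
    (V : Matrix (Fin n) (Fin k) ℝ) (hV : Vᵀ * V = 1)
    (Dtsqrt : Matrix (Fin n) (Fin n) ℝ)
    (hDtsqrt : Dtsqrt = Matrix.diagonal (fun i => Real.sqrt ((∑ j, A i j) + 1)))
    (S : Matrix (Fin k) (Fin k) ℝ) (hSpos : S.PosDef)
    (hSsq : S * S = Vᵀ * (Matrix.diagonal (fun i => ∑ j, A i j) + 1) * V)
    (H' : Matrix (Fin k) (Fin h) ℝ) (hH' : H' = S⁻¹ * (Vᵀ * Dtsqrt * H))
    (Z : ℕ → Matrix (Fin k) (Fin h) ℝ)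
    (hZ1 : Z 0 = H')
    (hZrec : ∀ t : ℕ,
      Z (t + 1) = (1 - β) • (S⁻¹ * (Vᵀ * (A + 1) * V) * S⁻¹ * Z t) + β • H') :
    ∃ Zstar : Matrix (Fin k) (Fin h) ℝ,
      (∀ W : Matrix (Fin k) (Fin h) ℝ,
        ((1 : Matrix (Fin k) (Fin k) ℝ) - (1 - β) • (S⁻¹ * (Vᵀ * (A + 1) * V) * S⁻¹)) * W
            = β • H' ↔ W = Zstar) ∧
      Tendsto Z atTop (𝓝 Zstar) :=
  stmt_4_general A hA_symm hA_nonneg β hβ V S hSpos hSsq H' Z hZrec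
end

section
/- Let V ∈ ℝ^{n×k}, let {C_1, …, C_{k'}} be a partition of {1, …, n} into nonempty clusters, and let P be its normalized partition matrix. Then ‖P Pᵀ V − V‖_F² = Σ_{j=1}^{k'} Σ_{i ∈ C_j} ‖v_i − g_j‖₂², where v_i ∈ ℝ^k is the i-th row of V and g_j = (1/|C_j|) Σ_{i ∈ C_j} v_i is the centroid of cluster C_j; i.e., ‖P Pᵀ V − V‖_F² equals the k-means cost of the partition with respect to the rows of V. -/
open Matrix

/-- The cluster of index `j` under the partition of `{1,…,n}` induced by `f`. -/
def cluster {n k' : ℕ} (f : Fin n → Fin k') (j : Fin k') : Finset (Fin n) :=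
  Finset.univ.filter (fun i => f i = j)

/-- The normalized partition matrix of the partition induced by `f`:
`P i j = 1/√|C_j|` if `i ∈ C_j` and `0` otherwise. -/
noncomputable def normPartition {n k' : ℕ} (f : Fin n → Fin k') :
    Matrix (Fin n) (Fin k') ℝ :=
  Matrix.of fun i j => if f i = j then 1 / Real.sqrt ((cluster f j).card) else 0

/-- The centroid of cluster `C_j` with respect to the rows of `V`. -/
noncomputable def centroid {n k k' : ℕ} (V : Matrix (Fin n) (Fin k) ℝ)
    (f : Fin n → Fin k') (j : Fin k') : Fin k → ℝ :=
  fun l => ((cluster f j).card : ℝ)⁻¹ * ∑ i ∈ cluster f j, V i l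

/-- The k-means cost of the partition induced by `f` with respect to the rows of `V`:
`Σ_j Σ_{i ∈ C_j} ‖v_i − g_j‖₂²`. -/
noncomputable def kmeansCost {n k k' : ℕ} (V : Matrix (Fin n) (Fin k) ℝ)
    (f : Fin n → Fin k') : ℝ :=
  ∑ j : Fin k', ∑ i ∈ cluster f j, ∑ l : Fin k, (V i l - centroid V f j l) ^ 2

/-! `P Pᵀ` averages over clusters: row `i` of `P Pᵀ V` is the centroid of the cluster of `i`.
So the rows of `P Pᵀ V - V` are the differences `g_{f i} - v_i`, and `Tr (Mᵀ M)` is the sum of the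
squared entries of `M`. -/

theorem Matrix.trace_transpose_mul_self {m n R : Type*} [Fintype m] [Fintype n]
    [CommSemiring R] (A : Matrix m n R) :
    trace (Aᵀ * A) = ∑ i, ∑ j, A i j ^ 2 := by
  simp only [trace, diag, mul_apply, transpose_apply, sq]
  exact Finset.sum_comm

lemma normPartition_mul_transpose_apply {n k' : ℕ} (f : Fin n → Fin k') (i i' : Fin n) :
    (normPartition f * (normPartition f)ᵀ) i i' =
      if f i' = f i then ((cluster f (f i)).card : ℝ)⁻¹ else 0 := by
  simp only [mul_apply, transpose_apply, normPartition, of_apply]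
  rw [Finset.sum_eq_single (f i) (fun j _ hj => by simp [Ne.symm hj]) (by simp), if_pos rfl]
  split_ifs
  · rw [one_div, ← mul_inv, Real.mul_self_sqrt (Nat.cast_nonneg _)]
  · simp

lemma normPartition_mul_transpose_mul_apply {n k k' : ℕ} (V : Matrix (Fin n) (Fin k) ℝ)
    (f : Fin n → Fin k') (i : Fin n) (l : Fin k) :
    (normPartition f * (normPartition f)ᵀ * V) i l = centroid V f (f i) l := by
  rw [mul_apply]
  simp only [normPartition_mul_transpose_apply, ite_mul, zero_mul, ← Finset.sum_filter, centroid,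
    cluster, Finset.mul_sum]

lemma kmeansCost_eq_sum_rows {n k k' : ℕ} (V : Matrix (Fin n) (Fin k) ℝ)
    (f : Fin n → Fin k') :
    kmeansCost V f = ∑ i, ∑ l, (V i l - centroid V f (f i) l) ^ 2 := by
  rw [kmeansCost, ← Finset.sum_fiberwise Finset.univ f]
  refine Finset.sum_congr rfl fun j _ => Finset.sum_congr rfl fun i hi => ?_
  rw [(Finset.mem_filter.1 hi).2]

theorem stmt_7_general {n k k' : ℕ} (V : Matrix (Fin n) (Fin k) ℝ)
    (f : Fin n → Fin k')
    (P : Matrix (Fin n) (Fin k') ℝ) (hP : P = normPartition f) :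
    Matrix.trace ((P * Pᵀ * V - V)ᵀ * (P * Pᵀ * V - V)) = kmeansCost V f := by
  subst hP
  rw [trace_transpose_mul_self, kmeansCost_eq_sum_rows]
  refine Finset.sum_congr rfl fun i _ => Finset.sum_congr rfl fun l _ => ?_
  rw [Matrix.sub_apply, normPartition_mul_transpose_mul_apply, ← neg_sub, neg_sq]

/-- Let V ∈ ℝ^{n×k}, let {C_1,…,C_{k'}} be a partition of {1,…,n} into
nonempty clusters (induced by a surjective map f), and let P be its normalized
partition matrix.  Then ‖P Pᵀ V − V‖_F² equals the k-means cost of the partition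
with respect to the rows of V.  Here ‖M‖_F² = Tr(Mᵀ M). -/
theorem stmt_7 {n k k' : ℕ} (V : Matrix (Fin n) (Fin k) ℝ)
    (f : Fin n → Fin k') (hf : Function.Surjective f)
    (P : Matrix (Fin n) (Fin k') ℝ) (hP : P = normPartition f) :
    Matrix.trace ((P * Pᵀ * V - V)ᵀ * (P * Pᵀ * V - V)) = kmeansCost V f :=
  stmt_7_general V f P hP
end

section
/- Let V ∈ ℝ^{n×k} have orthonormal columns (Vᵀ V = I_k), let {C_1, …, C_{k'}} be a partition of {1, …, n} into nonempty clusters with normalized partition matrix P, and let Cost(P) = Σ_{j=1}^{k'} Σ_{i ∈ C_j} ‖v_i − g_j‖₂² be the k-means cost of the partition with respect to the rows v_1, …, v_n of V, where g_j = (1/|C_j|) Σ_{i ∈ C_j} v_i. Then Tr(I_k − Vᵀ P Pᵀ V) = Cost(P); equivalently, the nuclear norm of I_k − Vᵀ P Pᵀ V (which is positive semidefinite) equals Cost(P). -/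
open Matrix

/-- The nuclear norm of a real square matrix: the sum of its singular values,
i.e. of the square roots of the eigenvalues of Mᵀ M. -/
noncomputable def nuclearNorm {k : ℕ} (M : Matrix (Fin k) (Fin k) ℝ) : ℝ :=
  ∑ i, Real.sqrt ((Matrix.isHermitian_conjTranspose_mul_self M).eigenvalues i)

/-!
By `VᵀV = 1` we have `1 - VᵀPPᵀV = Vᵀ(1 - PPᵀ)V`, and since `(Pᵀy)_j = (∑_{i ∈ C_j} y_i) / √|C_j|`,
the quadratic form `yᵀ(1 - PPᵀ)y = ‖y‖² - ‖Pᵀy‖²` is the within-cluster sum of squares of `y`.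
Summed over the columns of `V` this is the k-means cost, which gives the trace. Being a sum of
squares it is nonnegative, so `1 - VᵀPPᵀV` is positive semidefinite; it is then the square root
of its Gram matrix, whose eigenvalues define the nuclear norm, and so its nuclear norm is its trace.
-/

open Finset in
theorem Finset.sum_sub_mean_sq {ι K : Type*} [Field K] [CharZero K] (s : Finset ι) (x : ι → K) :
    ∑ i ∈ s, (x i - (#s : K)⁻¹ * ∑ i ∈ s, x i) ^ 2 =
      ∑ i ∈ s, x i ^ 2 - (∑ i ∈ s, x i) ^ 2 / #s := by
  rcases s.eq_empty_or_nonempty with rfl | hs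
  · simp
  have hcard : (#s : K) ≠ 0 := by exact_mod_cast hs.card_ne_zero
  simp only [sub_sq, sum_add_distrib, sum_sub_distrib, mul_pow, ← sum_mul, ← mul_sum,
    sum_const, nsmul_eq_mul]
  field_simp
  ring

namespace Matrix

variable {k m n R : Type*} [Fintype m] [CommRing R]

theorem one_sub_transpose_mul_mul [DecidableEq m] [DecidableEq n] {V : Matrix m n R}
    (hV : Vᵀ * V = 1) (Q : Matrix m m R) : 1 - Vᵀ * Q * V = Vᵀ * (1 - Q) * V := by
  rw [Matrix.mul_sub, Matrix.sub_mul, Matrix.mul_one, hV]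

theorem dotProduct_one_sub_mul_transpose_mulVec [Fintype k] [DecidableEq m] (P : Matrix m k R)
    (y : m → R) :
    y ⬝ᵥ ((1 - P * Pᵀ) *ᵥ y) = y ⬝ᵥ y - (Pᵀ *ᵥ y) ⬝ᵥ (Pᵀ *ᵥ y) := by
  rw [sub_mulVec, one_mulVec, dotProduct_sub, ← mulVec_mulVec, dotProduct_mulVec,
    ← mulVec_transpose]

theorem trace_transpose_mul_mul [Fintype n] (A : Matrix m m R) (B : Matrix m n R) :
    trace (Bᵀ * A * B) = ∑ l, (fun i => B i l) ⬝ᵥ (A *ᵥ fun i => B i l) := by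
  simp only [trace, diag_apply, Matrix.mul_assoc, mul_apply, transpose_apply, dotProduct, mulVec]

theorem IsHermitian.trace_cfc [Fintype n] [DecidableEq n] {𝕜 : Type*} [RCLike 𝕜]
    {A : Matrix n n 𝕜} (hA : A.IsHermitian) (g : ℝ → ℝ) :
    trace (hA.cfc g) = ∑ i, (g (hA.eigenvalues i) : 𝕜) := by
  rw [IsHermitian.cfc, Unitary.conjStarAlgAut_apply, trace_mul_cycle,
    UnitaryGroup.star_mul_self, Matrix.one_mul, trace_diagonal]
  rfl

open scoped ComplexOrder in
theorem PosSemidef.eq_cfc_sqrt_conjTranspose_mul_self [Fintype n] [DecidableEq n] {𝕜 : Type*}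
    [RCLike 𝕜] {M : Matrix n n 𝕜} (hM : M.PosSemidef) :
    M = (isHermitian_conjTranspose_mul_self M).cfc Real.sqrt := by
  open scoped MatrixOrder in
  have hsqrt : CFC.sqrt (Mᴴ * M) = M := by
    rw [hM.1.eq]; exact CFC.sqrt_mul_self M hM.nonneg
  open scoped MatrixOrder in
  rw [CFC.sqrt_eq_real_sqrt _ (posSemidef_conjTranspose_mul_self M).nonneg, cfcₙ_eq_cfc,
    (isHermitian_conjTranspose_mul_self M).cfc_eq] at hsqrt
  exact hsqrt.symm

end Matrix

theorem nuclearNorm_eq_trace {k : ℕ} {M : Matrix (Fin k) (Fin k) ℝ} (hM : M.PosSemidef) :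
    nuclearNorm M = M.trace := by
  conv_rhs => rw [hM.eq_cfc_sqrt_conjTranspose_mul_self]
  rw [Matrix.IsHermitian.trace_cfc]
  rfl

section Partition

open Finset

variable {n k' : ℕ}

theorem normPartition_transpose_mulVec_apply (f : Fin n → Fin k') (y : Fin n → ℝ)
    (j : Fin k') :
    ((normPartition f)ᵀ *ᵥ y) j = (∑ i ∈ cluster f j, y i) / √(#(cluster f j) : ℝ) := by
  simp only [mulVec, dotProduct, transpose_apply, normPartition, of_apply, ite_mul, zero_mul,
    ← sum_filter, div_eq_inv_mul, mul_sum, mul_one]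
  rfl

theorem dotProduct_one_sub_normPartition_mulVec (f : Fin n → Fin k') (y : Fin n → ℝ) :
    y ⬝ᵥ ((1 - normPartition f * (normPartition f)ᵀ) *ᵥ y) =
      ∑ j, ∑ i ∈ cluster f j, (y i - (#(cluster f j) : ℝ)⁻¹ * ∑ i ∈ cluster f j, y i) ^ 2 := by
  simp only [dotProduct_one_sub_mul_transpose_mulVec, sum_sub_mean_sq, sum_sub_distrib]
  congr 1
  · simp only [dotProduct, ← sq]
    exact (sum_fiberwise univ f fun i => y i ^ 2).symm
  · simp only [dotProduct, normPartition_transpose_mulVec_apply, ← sq, div_pow,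
      Real.sq_sqrt (Nat.cast_nonneg _)]

theorem posSemidef_one_sub_normPartition_mul_transpose (f : Fin n → Fin k') :
    (1 - normPartition f * (normPartition f)ᵀ).PosSemidef := by
  refine .of_dotProduct_mulVec_nonneg ?_ fun y => ?_
  · simp [IsHermitian, sub_eq_add_neg, conjTranspose_eq_transpose_of_trivial, transpose_mul]
  · rw [star_trivial, dotProduct_one_sub_normPartition_mulVec]
    positivity

end Partition

theorem stmt_8_general {n k k' : ℕ} (V : Matrix (Fin n) (Fin k) ℝ) (hV : Vᵀ * V = 1)
    (f : Fin n → Fin k')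
    (P : Matrix (Fin n) (Fin k') ℝ) (hP : P = normPartition f) :
    Matrix.trace ((1 : Matrix (Fin k) (Fin k) ℝ) - Vᵀ * P * Pᵀ * V) = kmeansCost V f ∧
    nuclearNorm ((1 : Matrix (Fin k) (Fin k) ℝ) - Vᵀ * P * Pᵀ * V) = kmeansCost V f := by
  subst hP
  have hM : 1 - Vᵀ * normPartition f * (normPartition f)ᵀ * V =
      Vᵀ * (1 - normPartition f * (normPartition f)ᵀ) * V := by
    rw [Matrix.mul_assoc Vᵀ, one_sub_transpose_mul_mul hV]
  have htrace :
      (1 - Vᵀ * normPartition f * (normPartition f)ᵀ * V).trace = kmeansCost V f := by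
    rw [hM, trace_transpose_mul_mul]
    simp only [dotProduct_one_sub_normPartition_mulVec, kmeansCost, centroid]
    rw [Finset.sum_comm]
    exact Finset.sum_congr rfl fun j _ => Finset.sum_comm
  have hpsd : (1 - Vᵀ * normPartition f * (normPartition f)ᵀ * V).PosSemidef := by
    rw [hM, ← conjTranspose_eq_transpose_of_trivial]
    exact (posSemidef_one_sub_normPartition_mul_transpose f).conjTranspose_mul_mul_same V
  exact ⟨htrace, (nuclearNorm_eq_trace hpsd).trans htrace⟩

/-- Let V ∈ ℝ^{n×k} have orthonormal columns, let {C_1,…,C_{k'}} be a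
partition of {1,…,n} into nonempty clusters (induced by a surjective map f), with
normalized partition matrix P, and let Cost(P) be the k-means cost of the partition
with respect to the rows of V.  Then Tr(I_k − Vᵀ P Pᵀ V) = Cost(P); equivalently the
nuclear norm of the (positive semidefinite) matrix I_k − Vᵀ P Pᵀ V equals Cost(P). -/
theorem stmt_8 {n k k' : ℕ} (V : Matrix (Fin n) (Fin k) ℝ) (hV : Vᵀ * V = 1)
    (f : Fin n → Fin k') (hf : Function.Surjective f)
    (P : Matrix (Fin n) (Fin k') ℝ) (hP : P = normPartition f) :
    Matrix.trace ((1 : Matrix (Fin k) (Fin k) ℝ) - Vᵀ * P * Pᵀ * V) = kmeansCost V f ∧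
    nuclearNorm ((1 : Matrix (Fin k) (Fin k) ℝ) - Vᵀ * P * Pᵀ * V) = kmeansCost V f :=
  stmt_8_general V hV f P hP
end

section
/- Let L ∈ ℝ^{n×n} be symmetric positive semidefinite, let V ∈ ℝ^{n×k}, let P ∈ ℝ^{n×k} satisfy Pᵀ P = I_k, and let 0 ≤ ε < 1. Suppose that for every y in the column space C of V, ‖y − P Pᵀ y‖_L ≤ ε ‖y‖_L. Then for every y ∈ C there exists x ∈ ℝ^k (namely x = Pᵀ y) such that |yᵀ L y − xᵀ (Pᵀ L P) x| ≤ 3ε ‖y‖_L². -/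
/-!
Write `q = y - P Pᵀ y`, so that `P x = y - q` for `x = Pᵀ y` and `xᵀ (Pᵀ L P) x = ‖y - q‖_L²`.
Expanding, `‖y‖_L² - ‖y - q‖_L² = 2 ⟨y, q⟩_L - ‖q‖_L²`, and Cauchy–Schwarz for the semidefinite
form `⟨u, v⟩_L = uᵀ L v` together with `‖q‖_L ≤ ε ‖y‖_L` bounds this by
`(2ε + ε²) ‖y‖_L² ≤ 3ε ‖y‖_L²`.
-/

open Matrix

/-- The L-seminorm ‖y‖_L = √(yᵀ L y) of a vector, for L symmetric PSD. -/
noncomputable def Lnorm {n : ℕ} (L : Matrix (Fin n) (Fin n) ℝ) (y : Fin n → ℝ) : ℝ :=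
  Real.sqrt (y ⬝ᵥ (L *ᵥ y))

namespace LinearMap.BilinForm

variable {R M : Type*} [CommRing R] [LinearOrder R] [IsStrictOrderedRing R]
  [AddCommGroup M] [Module R M] {B : LinearMap.BilinForm R M}

lemma IsPosSemidef.abs_apply_le (hB : B.IsPosSemidef) {x y : M} {ε : R} (hε : 0 ≤ ε)
    (hy : B y y ≤ ε ^ 2 * B x x) : |B x y| ≤ ε * B x x := by
  have hx : 0 ≤ B x x := hB.isNonneg.nonneg x
  refine abs_le_of_sq_le_sq ?_ (mul_nonneg hε hx)
  calc B x y ^ 2 ≤ B x x * B y y :=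
        B.apply_sq_le_of_symm hB.isNonneg.nonneg (isSymm_iff.1 hB.isSymm) x y
    _ ≤ B x x * (ε ^ 2 * B x x) := mul_le_mul_of_nonneg_left hy hx
    _ = (ε * B x x) ^ 2 := by ring

lemma IsPosSemidef.abs_apply_self_sub_apply_sub_le (hB : B.IsPosSemidef) {x y : M} {ε : R}
    (hε0 : 0 ≤ ε) (hε1 : ε ≤ 1) (hy : B y y ≤ ε ^ 2 * B x x) :
    |B x x - B (x - y) (x - y)| ≤ 3 * ε * B x x := by
  have hx : 0 ≤ B x x := hB.isNonneg.nonneg x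
  have hxy : |B x y| ≤ ε * B x x := hB.abs_apply_le hε0 hy
  have hexpand : B x x - B (x - y) (x - y) = 2 * B x y - B y y := by
    simp only [map_sub, LinearMap.sub_apply, hB.isSymm.eq y x]
    ring
  have hεsq : ε ^ 2 * B x x ≤ ε * B x x :=
    mul_le_mul_of_nonneg_right (pow_le_of_le_one hε0 hε1 two_ne_zero) hx
  rw [hexpand, abs_le]
  constructor <;> linarith [abs_le.1 hxy, hB.isNonneg.nonneg y, mul_nonneg hε0 hx]

end LinearMap.BilinForm

lemma Matrix.PosSemidef.isPosSemidef_toBilin' {ι : Type*} [Fintype ι] [DecidableEq ι]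
    {L : Matrix ι ι ℝ} (hL : L.PosSemidef) : L.toBilin'.IsPosSemidef where
  isSymm := isSymm_toBilin'_iff_isSymm.2 ((conjTranspose_eq_transpose_of_trivial L).symm.trans hL.1)
  isNonneg := ⟨fun x => by simpa [toBilin'_apply'] using hL.dotProduct_mulVec_nonneg x⟩

lemma Matrix.dotProduct_transpose_mul_mul_mulVec {R m ι : Type*} [CommSemiring R] [Fintype m]
    [Fintype ι] (L : Matrix m m R) (P : Matrix m ι R) (x : ι → R) :
    x ⬝ᵥ (Pᵀ * L * P) *ᵥ x = P *ᵥ x ⬝ᵥ L *ᵥ (P *ᵥ x) := by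
  rw [← mulVec_mulVec, ← mulVec_mulVec, dotProduct_mulVec x Pᵀ, vecMul_transpose]

lemma dotProduct_mulVec_le_of_Lnorm_le {n : ℕ} {L : Matrix (Fin n) (Fin n) ℝ} (hL : L.PosSemidef)
    {q y : Fin n → ℝ} {ε : ℝ} (hε : 0 ≤ ε) (h : Lnorm L q ≤ ε * Lnorm L y) :
    q ⬝ᵥ L *ᵥ q ≤ ε ^ 2 * (y ⬝ᵥ L *ᵥ y) := by
  have hy : 0 ≤ y ⬝ᵥ L *ᵥ y := by simpa using hL.dotProduct_mulVec_nonneg y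
  rwa [Lnorm, Lnorm, ← Real.sqrt_sq hε, ← Real.sqrt_mul (sq_nonneg ε),
    Real.sqrt_le_sqrt_iff (mul_nonneg (sq_nonneg ε) hy)] at h

theorem stmt_11_general {n k : ℕ} (L : Matrix (Fin n) (Fin n) ℝ) (hL : L.PosSemidef)
    (V : Matrix (Fin n) (Fin k) ℝ) (P : Matrix (Fin n) (Fin k) ℝ)
    (ε : ℝ) (hε0 : 0 ≤ ε) (hε1 : ε < 1)
    (happrox : ∀ y : Fin n → ℝ, (∃ z : Fin k → ℝ, y = V *ᵥ z) →
      Lnorm L (y - P *ᵥ (Pᵀ *ᵥ y)) ≤ ε * Lnorm L y) :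
    ∀ y : Fin n → ℝ, (∃ z : Fin k → ℝ, y = V *ᵥ z) →
      ∃ x : Fin k → ℝ, x = Pᵀ *ᵥ y ∧
        |y ⬝ᵥ (L *ᵥ y) - x ⬝ᵥ ((Pᵀ * L * P) *ᵥ x)| ≤ 3 * ε * (y ⬝ᵥ (L *ᵥ y)) := by
  intro y hy
  refine ⟨Pᵀ *ᵥ y, rfl, ?_⟩
  have hresidual := dotProduct_mulVec_le_of_Lnorm_le hL hε0 (happrox y hy)
  have hbound := hL.isPosSemidef_toBilin'.abs_apply_self_sub_apply_sub_le hε0 hε1.le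
    (by simpa only [toBilin'_apply'] using hresidual)
  simpa only [toBilin'_apply', sub_sub_cancel, dotProduct_transpose_mul_mul_mulVec] using hbound

/-- Let L ∈ ℝ^{n×n} be symmetric PSD, V ∈ ℝ^{n×k}, P ∈ ℝ^{n×k} with
Pᵀ P = I_k, and 0 ≤ ε < 1.  If ‖y − P Pᵀ y‖_L ≤ ε ‖y‖_L for all y in the column
space of V, then for every such y there is x ∈ ℝ^k (namely x = Pᵀ y) with
|yᵀ L y − xᵀ (Pᵀ L P) x| ≤ 3 ε ‖y‖_L². -/
theorem stmt_11 {n k : ℕ} (L : Matrix (Fin n) (Fin n) ℝ) (hL : L.PosSemidef)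
    (V : Matrix (Fin n) (Fin k) ℝ) (P : Matrix (Fin n) (Fin k) ℝ) (hP : Pᵀ * P = 1)
    (ε : ℝ) (hε0 : 0 ≤ ε) (hε1 : ε < 1)
    (happrox : ∀ y : Fin n → ℝ, (∃ z : Fin k → ℝ, y = V *ᵥ z) →
      Lnorm L (y - P *ᵥ (Pᵀ *ᵥ y)) ≤ ε * Lnorm L y) :
    ∀ y : Fin n → ℝ, (∃ z : Fin k → ℝ, y = V *ᵥ z) →
      ∃ x : Fin k → ℝ, x = Pᵀ *ᵥ y ∧
        |y ⬝ᵥ (L *ᵥ y) - x ⬝ᵥ ((Pᵀ * L * P) *ᵥ x)| ≤ 3 * ε * (y ⬝ᵥ (L *ᵥ y)) :=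
  stmt_11_general L hL V P ε hε0 hε1 happrox
end

section
/- Let P̂ ∈ {0,1}^{n×k} be a partition matrix of a partition of {1, …, n} into nonempty clusters, C = diag(|C_1|, …, |C_k|), and P = P̂ C^{-1/2} the normalized partition matrix. Let A ∈ ℝ^{n×n} be symmetric with nonnegative entries, D the diagonal degree matrix with D_ii = Σ_j A_ij, Ã = A + I, D̃ = D + I, A_P̂ = P̂ᵀ A P̂, and D_P̂ = P̂ᵀ D P̂. Then the coarse graph convolution operator satisfies (D_P̂ + C)^{-1/2} (A_P̂ + C) (D_P̂ + C)^{-1/2} = (Pᵀ D̃ P)^{-1/2} (Pᵀ Ã P) (Pᵀ D̃ P)^{-1/2}, where the inverse square roots are well-defined because D_P̂ + C and Pᵀ D̃ P are diagonal matrices with positive diagonal entries. -/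
/-!
Writing `S = C^{-1/2}`, we have `P = P̂ S` and `P̂ᵀ P̂ = C`, so `Pᵀ (X + I) P = S (P̂ᵀ X P̂ + C) S`
for every `X`. Both sides of the identity are therefore of the form `M^{-1/2} N M^{-1/2}`, the
right one with `M, N` replaced by `S M S, S N S`; since `S` is a positive diagonal matrix,
`(S M S)^{-1/2} = S^{-1} M^{-1/2}`, and the factors of `S` cancel.
-/

open Matrix

/-- The inverse square root of a diagonal matrix with positive diagonal entries:
the diagonal matrix with entries 1/√(M j j). -/
noncomputable def invSqrtDiag {k : ℕ} (M : Matrix (Fin k) (Fin k) ℝ) :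
    Matrix (Fin k) (Fin k) ℝ :=
  Matrix.diagonal (fun j => 1 / Real.sqrt (M j j))

theorem Matrix.transpose_mul_self_of_indicator {ι κ R : Type*} [Fintype ι] [DecidableEq κ]
    [NonAssocSemiring R] (f : ι → κ) (Q : Matrix ι κ R)
    (hQ : ∀ i j, Q i j = if f i = j then 1 else 0) :
    Qᵀ * Q = diagonal fun j => ((Finset.univ.filter fun i => f i = j).card : R) := by
  ext j j'
  simp only [mul_apply, transpose_apply, hQ, diagonal_apply, ite_mul, one_mul, zero_mul]
  split_ifs with h
  · rw [Finset.card_filter, Nat.cast_sum]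
    refine Finset.sum_congr rfl fun i _ => ?_
    split_ifs <;> simp_all
  · refine Finset.sum_eq_zero fun i _ => ?_
    split_ifs with h1 h2 <;> first | rfl | exact absurd (h1.symm.trans h2) h

theorem invSqrtDiag_diagonal_mul_mul_diagonal {k : ℕ} {s : Fin k → ℝ} (hs : ∀ j, 0 ≤ s j)
    (M : Matrix (Fin k) (Fin k) ℝ) :
    invSqrtDiag (diagonal s * M * diagonal s) = diagonal s⁻¹ * invSqrtDiag M := by
  rw [invSqrtDiag, invSqrtDiag, diagonal_mul_diagonal]
  refine congrArg diagonal (funext fun j => ?_)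
  simp only [mul_diagonal, diagonal_mul, Pi.inv_apply]
  rw [mul_right_comm, ← sq, Real.sqrt_mul (sq_nonneg _), Real.sqrt_sq (hs j)]
  field_simp

theorem invSqrtDiag_mul_mul_invSqrtDiag_diagonal_conj {k : ℕ} {s : Fin k → ℝ}
    (hs : ∀ j, 0 < s j) (M N : Matrix (Fin k) (Fin k) ℝ) :
    invSqrtDiag (diagonal s * M * diagonal s) * (diagonal s * N * diagonal s) *
        invSqrtDiag (diagonal s * M * diagonal s) =
      invSqrtDiag M * N * invSqrtDiag M := by
  rw [invSqrtDiag_diagonal_mul_mul_diagonal (fun j => (hs j).le), invSqrtDiag,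
    diagonal_mul_diagonal]
  ext i j
  simp only [mul_diagonal, diagonal_mul, Pi.inv_apply]
  field_simp [(hs i).ne', (hs j).ne']

theorem Matrix.transpose_mul_add_one_mul_of_eq_mul_diagonal {m n R : Type*} [Fintype m]
    [Fintype n] [DecidableEq m] [DecidableEq n] [CommSemiring R] (Q P : Matrix m n R)
    (s : n → R) (hP : P = Q * diagonal s) (X : Matrix m m R) :
    Pᵀ * (X + 1) * P = diagonal s * (Qᵀ * X * Q + Qᵀ * Q) * diagonal s := by
  simp only [hP, transpose_mul, diagonal_transpose, Matrix.mul_add, Matrix.add_mul,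
    Matrix.mul_one, Matrix.mul_assoc]

theorem stmt_15_general {n k : ℕ} (f : Fin n → Fin k) (hf : Function.Surjective f)
    (Phat : Matrix (Fin n) (Fin k) ℝ)
    (hPhat : ∀ i j, Phat i j = if f i = j then 1 else 0)
    (c : Fin k → ℕ) (hc : ∀ j, c j = (Finset.univ.filter (fun i => f i = j)).card)
    (P : Matrix (Fin n) (Fin k) ℝ)
    (hP : P = Phat * Matrix.diagonal (fun j => 1 / Real.sqrt (c j)))
    (A : Matrix (Fin n) (Fin n) ℝ)
    (D : Matrix (Fin n) (Fin n) ℝ) :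
    invSqrtDiag (Phatᵀ * D * Phat + Matrix.diagonal (fun j => (c j : ℝ))) *
        (Phatᵀ * A * Phat + Matrix.diagonal (fun j => (c j : ℝ))) *
        invSqrtDiag (Phatᵀ * D * Phat + Matrix.diagonal (fun j => (c j : ℝ))) =
      invSqrtDiag (Pᵀ * (D + 1) * P) * (Pᵀ * (A + 1) * P) *
        invSqrtDiag (Pᵀ * (D + 1) * P) := by
  have hc_pos : ∀ j, 0 < (c j : ℝ) := fun j => by
    obtain ⟨i, rfl⟩ := hf j
    rw [hc]
    exact_mod_cast Finset.card_pos.mpr ⟨i, by simp⟩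
  have hPhat_gram : Phatᵀ * Phat = diagonal fun j => (c j : ℝ) := by
    simp only [hc]
    exact transpose_mul_self_of_indicator f Phat hPhat
  have hs_pos : ∀ j, 0 < 1 / Real.sqrt (c j) := fun j =>
    one_div_pos.mpr (Real.sqrt_pos.mpr (hc_pos j))
  rw [transpose_mul_add_one_mul_of_eq_mul_diagonal Phat P _ hP,
    transpose_mul_add_one_mul_of_eq_mul_diagonal Phat P _ hP, hPhat_gram,
    invSqrtDiag_mul_mul_invSqrtDiag_diagonal_conj hs_pos]

/-- Let P̂ be the partition matrix of a partition of {1,…,n} into k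
nonempty clusters (encoded by a surjective map f), C = diag(|C_1|,…,|C_k|), and
P = P̂ C^{-1/2} the normalized partition matrix.  Let A be symmetric with
nonnegative entries, D the degree matrix, Ã = A + I, D̃ = D + I, A_P̂ = P̂ᵀ A P̂ and
D_P̂ = P̂ᵀ D P̂.  Then the coarse graph convolution operator satisfies
(D_P̂ + C)^{-1/2} (A_P̂ + C) (D_P̂ + C)^{-1/2}
  = (Pᵀ D̃ P)^{-1/2} (Pᵀ Ã P) (Pᵀ D̃ P)^{-1/2},
where the inverse square roots are well-defined because D_P̂ + C and Pᵀ D̃ P are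
diagonal matrices with positive diagonal entries. -/
theorem stmt_15 {n k : ℕ} (f : Fin n → Fin k) (hf : Function.Surjective f)
    (Phat : Matrix (Fin n) (Fin k) ℝ)
    (hPhat : ∀ i j, Phat i j = if f i = j then 1 else 0)
    (c : Fin k → ℕ) (hc : ∀ j, c j = (Finset.univ.filter (fun i => f i = j)).card)
    (P : Matrix (Fin n) (Fin k) ℝ)
    (hP : P = Phat * Matrix.diagonal (fun j => 1 / Real.sqrt (c j)))
    (A : Matrix (Fin n) (Fin n) ℝ) (hA_symm : Aᵀ = A) (hA_nonneg : ∀ i j, 0 ≤ A i j)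
    (D : Matrix (Fin n) (Fin n) ℝ) (hD : D = Matrix.diagonal (fun i => ∑ j, A i j)) :
    invSqrtDiag (Phatᵀ * D * Phat + Matrix.diagonal (fun j => (c j : ℝ))) *
        (Phatᵀ * A * Phat + Matrix.diagonal (fun j => (c j : ℝ))) *
        invSqrtDiag (Phatᵀ * D * Phat + Matrix.diagonal (fun j => (c j : ℝ))) =
      invSqrtDiag (Pᵀ * (D + 1) * P) * (Pᵀ * (A + 1) * P) *
        invSqrtDiag (Pᵀ * (D + 1) * P) :=
  stmt_15_general f hf Phat hPhat c hc P hP A D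
end
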